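/- Let ρ be a d×d density matrix, let n ≥ 1, and let α_1, …, α_n be real numbers, not all zero, with γ := max_j |α_j|. With the variant QSF circuit built from the uniform control state ψ := Σ_{j=1}^n (1/√n) |j⟩ and rotation angles θ_j := arcsin(α_j/γ) — i.e. W := Σ_{j=1}^n |j⟩⟨j| ⊗ [ (|0⟩⟨0| ⊗ I + |1⟩⟨1| ⊗ (P_j ⊗ I)) (R_y(θ_j) ⊗ I) ] on ℂ^n ⊗ ℂ² ⊗ (ℂ^d)^{⊗n} — the Pauli-X expectation on the single-qubit register satisfies tr[ (I_n ⊗ X ⊗ I) · W (|ψ⟩⟨ψ| ⊗ |0⟩⟨0| ⊗ ρ^{⊗n}) W† ] = (1/(nγ)) Σ_{j=1}^n α_j tr(ρ^j), so that n·γ times this expectation equals the polynomial function f_n(ρ) = Σ_{j=1}^n α_j tr(ρ^j). -/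

import Mathlib

open Matrix Kronecker
open scoped ComplexOrder

/-- `|0⟩⟨0|` on one qubit. -/
noncomputable def ketbra0 : Matrix (Fin 2) (Fin 2) ℂ := !![1, 0; 0, 0]

/-- `|1⟩⟨1|` on one qubit. -/
noncomputable def ketbra1 : Matrix (Fin 2) (Fin 2) ℂ := !![0, 0; 0, 1]

/-- The Pauli-X matrix. -/
noncomputable def pauliX : Matrix (Fin 2) (Fin 2) ℂ := !![0, 1; 1, 0]

/-- The single-qubit rotation `R_y(θ)` with first column `(cos(θ/2), sin(θ/2))`
and second column `(−sin(θ/2), cos(θ/2))`. -/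
noncomputable def Ry (θ : ℝ) : Matrix (Fin 2) (Fin 2) ℂ :=
  !![(Real.cos (θ / 2) : ℂ), (-(Real.sin (θ / 2)) : ℝ);
     (Real.sin (θ / 2) : ℂ), (Real.cos (θ / 2) : ℂ)]

/-- The n-fold tensor (Kronecker) power `ρ^{⊗n}`, indexed by tuples `Fin n → Fin d`. -/
noncomputable def tensorPow (d n : ℕ) (ρ : Matrix (Fin d) (Fin d) ℂ) :
    Matrix (Fin n → Fin d) (Fin n → Fin d) ℂ :=
  Matrix.of fun x y => ∏ i, ρ (x i) (y i)

/-- The index map underlying the cyclic permutation of the first `j` of `n` tensor factors. -/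
def cycIdx (n j : ℕ) (i : Fin n) : Fin n :=
  if h : (i : ℕ) + 1 < j ∧ (i : ℕ) + 1 < n then ⟨(i : ℕ) + 1, h.2⟩
  else if (i : ℕ) + 1 = j then ⟨0, i.pos⟩
  else i

/-- `P_j ⊗ I`: the cyclic permutation operator on the first `j` tensor factors of
`(ℂ^d)^{⊗n}`, identity on the remaining factors. -/
noncomputable def cycPerm (d n j : ℕ) : Matrix (Fin n → Fin d) (Fin n → Fin d) ℂ :=
  Matrix.of fun y x => if y = (fun i => x (cycIdx n j i)) then 1 else 0

/-- The QSF circuit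
`W = Σ_{j=1}^n |j⟩⟨j| ⊗ [(|0⟩⟨0| ⊗ I + |1⟩⟨1| ⊗ (P_j ⊗ I)) · (R_y(θ_j) ⊗ I)]`
on `ℂ^n ⊗ ℂ² ⊗ (ℂ^d)^{⊗n}` (the index `j : Fin n` encodes the degree `j + 1`). -/
noncomputable def qsfW (d n : ℕ) (θ : Fin n → ℝ) :
    Matrix (Fin n × Fin 2 × (Fin n → Fin d)) (Fin n × Fin 2 × (Fin n → Fin d)) ℂ :=
  ∑ j : Fin n, Matrix.single j j (1 : ℂ) ⊗ₖ
    ((ketbra0 ⊗ₖ (1 : Matrix (Fin n → Fin d) (Fin n → Fin d) ℂ)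
        + ketbra1 ⊗ₖ cycPerm d n ((j : ℕ) + 1)) *
      (Ry (θ j) ⊗ₖ (1 : Matrix (Fin n → Fin d) (Fin n → Fin d) ℂ)))

/-!
`W` is block diagonal in the control register, so the expectation is the `1/n`-weighted sum of the
expectations of the branches `j`. In branch `j`, `R_y(θ_j)` prepares `cos(θ_j/2)|0⟩ + sin(θ_j/2)|1⟩`
and the controlled `P_j` turns the circuit into a Hadamard-type test:
`⟨X⟩ = sin θ_j · Re tr(P_j ρ^{⊗n}) = (α_j/γ) · Re tr(P_j ρ^{⊗n})`. Finally `tr(P_j ρ^{⊗n})` is a sum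
over closed paths of length `j`, i.e. `tr(ρ^j)`, each of the last `n - j` factors contributing
`tr ρ = 1`; and `tr(ρ^j)` is real since `ρ` is Hermitian.
-/

section CycIdx

variable {n j : ℕ}

lemma cycIdx_self_castSucc (i : Fin n) : cycIdx (n + 1) (n + 1) i.castSucc = i.succ := by
  ext
  simp [cycIdx]

lemma cycIdx_self_last : cycIdx (n + 1) (n + 1) (Fin.last n) = 0 := by
  ext
  simp [cycIdx]

lemma cycIdx_succ_castSucc (hjn : j ≤ n) (i : Fin n) :
    cycIdx (n + 1) j i.castSucc = (cycIdx n j i).castSucc := by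
  ext
  simp only [cycIdx, Fin.val_castSucc]
  split_ifs <;> (try simp) <;> omega

lemma cycIdx_succ_last (hjn : j ≤ n) : cycIdx (n + 1) j (Fin.last n) = Fin.last n := by
  ext
  simp only [cycIdx, Fin.val_last]
  split_ifs <;> (try simp) <;> omega

end CycIdx

section CyclicTrace

variable {R ι : Type*} [CommSemiring R] [Fintype ι] [DecidableEq ι] (M : Matrix ι ι R)

theorem sum_prod_chain_mul_eq_trace_pow_mul (m : ℕ) (A : Matrix ι ι R) :
    ∑ y : Fin (m + 1) → ι, (∏ i : Fin m, M (y i.castSucc) (y i.succ)) * A (y (Fin.last m)) (y 0)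
      = (M ^ m * A).trace := by
  induction m generalizing A with
  | zero =>
    rw [← (Equiv.funUnique (Fin 1) ι).symm.sum_comp]
    simp [trace]
  | succ m ih =>
    rw [pow_succ, mul_assoc, ← ih, ← (Fin.snocEquiv fun _ => ι).sum_comp,
      Fintype.sum_prod_type_right]
    refine Finset.sum_congr rfl fun z _ => ?_
    have h0 : (0 : Fin (m + 2)) = Fin.castSucc 0 := rfl
    simp only [Fin.snocEquiv_apply, Fin.prod_univ_castSucc, Fin.snoc_castSucc, Fin.succ_castSucc,
      Fin.succ_last, Fin.snoc_last, h0, mul_apply, Finset.mul_sum]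
    exact Finset.sum_congr rfl fun c _ => by ring

lemma sum_prod_cycIdx_self (m : ℕ) :
    ∑ y : Fin (m + 1) → ι, ∏ i, M (y i) (y (cycIdx (m + 1) (m + 1) i)) = (M ^ (m + 1)).trace := by
  simp only [Fin.prod_univ_castSucc, cycIdx_self_castSucc, cycIdx_self_last]
  rw [sum_prod_chain_mul_eq_trace_pow_mul, pow_succ]

lemma sum_prod_cycIdx (htr : M.trace = 1) {j : ℕ} (hj : 1 ≤ j) {n : ℕ} (hjn : j ≤ n) :
    ∑ y : Fin n → ι, ∏ i, M (y i) (y (cycIdx n j i)) = (M ^ j).trace := by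
  induction n, hjn using Nat.le_induction with
  | base =>
    obtain ⟨m, rfl⟩ : ∃ m, j = m + 1 := ⟨j - 1, by omega⟩
    exact sum_prod_cycIdx_self M m
  | succ n hjn ih =>
    rw [← ih, ← (Fin.snocEquiv fun _ => ι).sum_comp, Fintype.sum_prod_type_right]
    refine Finset.sum_congr rfl fun z _ => ?_
    simp only [Fin.snocEquiv_apply, Fin.prod_univ_castSucc, cycIdx_succ_castSucc hjn,
      cycIdx_succ_last hjn, Fin.snoc_castSucc, Fin.snoc_last, ← Finset.mul_sum]
    rw [show ∑ c, M c c = M.trace from rfl, htr, mul_one]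

end CyclicTrace

lemma trace_cycPerm_mul_tensorPow {d n j : ℕ} (ρ : Matrix (Fin d) (Fin d) ℂ) (htr : ρ.trace = 1)
    (hj : 1 ≤ j) (hjn : j ≤ n) : (cycPerm d n j * tensorPow d n ρ).trace = (ρ ^ j).trace := by
  rw [trace_mul_comm, ← sum_prod_cycIdx ρ htr hj hjn]
  refine Finset.sum_congr rfl fun y _ => ?_
  simp [mul_apply, cycPerm, tensorPow]

lemma trace_one_kronecker_mul_select_conj {R m F : Type*} [CommSemiring R] [StarRing R]
    [Fintype m] [DecidableEq m] [Fintype F] (O τ : Matrix F F R) (U : m → Matrix F F R)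
    (ψ : m → R) :
    ((1 ⊗ₖ O) * ((∑ j, single j j 1 ⊗ₖ U j) * (vecMulVec ψ (star ψ) ⊗ₖ τ) *
        (∑ j, single j j 1 ⊗ₖ U j)ᴴ)).trace
      = ∑ j, ψ j * star (ψ j) * (O * (U j * τ * (U j)ᴴ)).trace := by
  simp only [conjTranspose_sum, conjTranspose_kronecker, conjTranspose_single, star_one,
    Finset.sum_mul, Finset.mul_sum, trace_sum, ← mul_kronecker_mul, Matrix.one_mul,
    single_mul_mul_single, trace_kronecker]
  refine Finset.sum_congr rfl fun j _ => ?_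
  rw [Fintype.sum_eq_single j fun k hk => by rw [trace_single_eq_of_ne _ _ _ hk, zero_mul],
    trace_single_eq_same, vecMulVec_apply, Pi.star_apply, one_mul, mul_one]

noncomputable def controlledAfterRy {F : Type*} [Fintype F] [DecidableEq F] (θ : ℝ)
    (P : Matrix F F ℂ) : Matrix (Fin 2 × F) (Fin 2 × F) ℂ :=
  (ketbra0 ⊗ₖ (1 : Matrix F F ℂ) + ketbra1 ⊗ₖ P) * (Ry θ ⊗ₖ (1 : Matrix F F ℂ))

lemma Ry_mul_ketbra0_mul_conjTranspose (θ : ℝ) :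
    Ry θ * ketbra0 * (Ry θ)ᴴ =
      !![(Real.cos (θ / 2) ^ 2 : ℂ), Real.cos (θ / 2) * Real.sin (θ / 2);
        Real.cos (θ / 2) * Real.sin (θ / 2), Real.sin (θ / 2) ^ 2] := by
  rw [Ry]
  generalize Real.cos (θ / 2) = c
  generalize Real.sin (θ / 2) = s
  ext i j
  fin_cases i <;> fin_cases j <;>
    simp [ketbra0, mul_apply, Fin.sum_univ_two, conjTranspose_apply, Complex.conj_ofReal] <;> ring

lemma trace_pauliX_kronecker_mul_controlledAfterRy_conj {F : Type*} [Fintype F] [DecidableEq F]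
    (θ : ℝ) (P τ : Matrix F F ℂ) (hτ : τ.IsHermitian) :
    ((pauliX ⊗ₖ 1) * (controlledAfterRy θ P * (ketbra0 ⊗ₖ τ) * (controlledAfterRy θ P)ᴴ)).trace
      = Real.sin θ * ((P * τ).trace.re : ℂ) := by
  have hS := Ry_mul_ketbra0_mul_conjTranspose θ
  have hK0 : ketbra0ᴴ = ketbra0 := by ext i j; fin_cases i <;> fin_cases j <;> simp [ketbra0]
  have hK1 : ketbra1ᴴ = ketbra1 := by ext i j; fin_cases i <;> fin_cases j <;> simp [ketbra1]
  have hτP : (τ * Pᴴ).trace = star (P * τ).trace := by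
    rw [← trace_conjTranspose, conjTranspose_mul, hτ.eq]
  have hmid : (Ry θ ⊗ₖ (1 : Matrix F F ℂ)) * (ketbra0 ⊗ₖ τ) * (Ry θ ⊗ₖ (1 : Matrix F F ℂ))ᴴ
      = (Ry θ * ketbra0 * (Ry θ)ᴴ) ⊗ₖ τ := by
    rw [conjTranspose_kronecker, conjTranspose_one, ← mul_kronecker_mul, ← mul_kronecker_mul,
      Matrix.one_mul, Matrix.mul_one]
  set C : Matrix (Fin 2 × F) (Fin 2 × F) ℂ := ketbra0 ⊗ₖ 1 + ketbra1 ⊗ₖ P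
  rw [controlledAfterRy, conjTranspose_mul,
    show ∀ G X : Matrix (Fin 2 × F) (Fin 2 × F) ℂ, C * G * X * (Gᴴ * Cᴴ) = C * (G * X * Gᴴ) * Cᴴ
      by intros; simp only [Matrix.mul_assoc], hmid, hS]
  simp only [C, conjTranspose_add, conjTranspose_kronecker, hK0, hK1, conjTranspose_one,
    Matrix.add_mul, Matrix.mul_add, ← mul_kronecker_mul, Matrix.one_mul, Matrix.mul_one, trace_add,
    trace_kronecker]
  have hsin : Real.sin θ = 2 * Real.sin (θ / 2) * Real.cos (θ / 2) := by
    rw [← Real.sin_two_mul, mul_div_cancel₀ θ two_ne_zero]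
  have hre := Complex.add_conj (P * τ).trace
  push_cast at hre
  rw [hτP, Complex.star_def, hsin]
  generalize Real.cos (θ / 2) = c
  generalize Real.sin (θ / 2) = s
  simp [pauliX, ketbra0, ketbra1, trace_fin_two]
  linear_combination (c * s : ℂ) * hre

lemma Matrix.IsHermitian.coe_re_trace {ι : Type*} [Fintype ι] {A : Matrix ι ι ℂ}
    (hA : A.IsHermitian) : (A.trace.re : ℂ) = A.trace :=
  Complex.conj_eq_iff_re.mp <| by rw [← Complex.star_def, ← trace_conjTranspose, hA.eq]

lemma isHermitian_tensorPow {d : ℕ} (n : ℕ) {ρ : Matrix (Fin d) (Fin d) ℂ} (hρ : ρ.IsHermitian) :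
    (tensorPow d n ρ).IsHermitian := by
  ext x y
  simp only [conjTranspose_apply, tensorPow, of_apply, star_prod]
  exact Finset.prod_congr rfl fun i _ => by rw [← conjTranspose_apply, hρ.eq]

theorem stmt14_general (d n : ℕ)
    (ρ : Matrix (Fin d) (Fin d) ℂ) (hρ : ρ.PosSemidef) (hρtr : ρ.trace = 1)
    (α : Fin n → ℝ)
    (γ : ℝ) (hγub : ∀ j, |α j| ≤ γ) :
    (((1 : Matrix (Fin n) (Fin n) ℂ) ⊗ₖ
          (pauliX ⊗ₖ (1 : Matrix (Fin n → Fin d) (Fin n → Fin d) ℂ))) *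
        (qsfW d n (fun j => Real.arcsin (α j / γ)) *
          (Matrix.vecMulVec (fun _ => ((1 / Real.sqrt n : ℝ) : ℂ))
              (star fun _ : Fin n => ((1 / Real.sqrt n : ℝ) : ℂ)) ⊗ₖ
            (ketbra0 ⊗ₖ tensorPow d n ρ)) *
          (qsfW d n (fun j => Real.arcsin (α j / γ)))ᴴ)).trace
      = (1 / ((n : ℂ) * ((γ : ℝ) : ℂ))) *
          ∑ j : Fin n, ((α j : ℝ) : ℂ) * (ρ ^ ((j : ℕ) + 1)).trace := by
  have hsin : ∀ j, Real.sin (Real.arcsin (α j / γ)) = α j / γ := fun j => by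
    have hγ : 0 ≤ γ := (abs_nonneg _).trans (hγub j)
    have hle : |α j / γ| ≤ 1 := by
      rw [abs_div, abs_of_nonneg hγ]
      exact div_le_one_of_le₀ (hγub j) hγ
    exact Real.sin_arcsin (abs_le.mp hle).1 (abs_le.mp hle).2
  have hweight : ((1 / √n : ℝ) : ℂ) * star ((1 / √n : ℝ) : ℂ) = 1 / n := by
    rw [Complex.star_def, Complex.conj_ofReal, ← Complex.ofReal_mul, div_mul_div_comm, one_mul,
      Real.mul_self_sqrt n.cast_nonneg]
    norm_num
  have hcyc : ∀ j : Fin n,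
      ((cycPerm d n (j + 1) * tensorPow d n ρ).trace.re : ℂ) = (ρ ^ ((j : ℕ) + 1)).trace := by
    intro j
    rw [trace_cycPerm_mul_tensorPow ρ hρtr (by omega) j.isLt, (hρ.1.pow _).coe_re_trace]
  rw [qsfW, trace_one_kronecker_mul_select_conj, Finset.mul_sum]
  refine Finset.sum_congr rfl fun j _ => ?_
  rw [← controlledAfterRy, trace_pauliX_kronecker_mul_controlledAfterRy_conj _ _ _
    (isHermitian_tensorPow n hρ.1), hsin, hcyc, hweight]
  push_cast
  ring

/-- Proposition S1 of the paper (variant QSF, exact-expectation content): for a density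
matrix `ρ` and real coefficients `α_1, …, α_n`, not all zero, with `γ = max_j |α_j|`,
the variant QSF circuit with uniform control state `ψ = Σ_j (1/√n) |j⟩` and angles
`θ_j = arcsin(α_j/γ)` satisfies
`tr[(I ⊗ X ⊗ I) · W (|ψ⟩⟨ψ| ⊗ |0⟩⟨0| ⊗ ρ^{⊗n}) W†] = (1/(nγ)) Σ_j α_j tr(ρ^j)`,
so `n·γ` times this expectation equals `f_n(ρ) = Σ_j α_j tr(ρ^j)`. -/
theorem stmt14 (d n : ℕ) (hd : 1 ≤ d) (hn : 1 ≤ n)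
    (ρ : Matrix (Fin d) (Fin d) ℂ) (hρ : ρ.PosSemidef) (hρtr : ρ.trace = 1)
    (α : Fin n → ℝ) (hα : ∃ j, α j ≠ 0)
    (γ : ℝ) (hγub : ∀ j, |α j| ≤ γ) (hγmem : ∃ j, |α j| = γ) :
    (((1 : Matrix (Fin n) (Fin n) ℂ) ⊗ₖ
          (pauliX ⊗ₖ (1 : Matrix (Fin n → Fin d) (Fin n → Fin d) ℂ))) *
        (qsfW d n (fun j => Real.arcsin (α j / γ)) *
          (Matrix.vecMulVec (fun _ => ((1 / Real.sqrt n : ℝ) : ℂ))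
              (star fun _ : Fin n => ((1 / Real.sqrt n : ℝ) : ℂ)) ⊗ₖ
            (ketbra0 ⊗ₖ tensorPow d n ρ)) *
          (qsfW d n (fun j => Real.arcsin (α j / γ)))ᴴ)).trace
      = (1 / ((n : ℂ) * ((γ : ℝ) : ℂ))) *
          ∑ j : Fin n, ((α j : ℝ) : ℂ) * (ρ ^ ((j : ℕ) + 1)).trace :=
  stmt14_general d n ρ hρ hρtr α γ hγub
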